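/- arXiv:math/0412361 — 5 statements merged into one kernel-verified Lean document; each statement's English description precedes it below -/
import Mathlib

section
/- Let F, G ∈ D_j be forms of degree j such that dim_K(R_1∘F + R_1∘G) ≥ 2r − 2 and the first-order partials of F and G together involve all r variables (equivalently, R_{j−1}∘⟨F,G⟩ spans D_1 = ⟨X_1,...,X_r⟩). Then for all but finitely many λ ∈ K, dim_K(R_1∘(F + λG)) = r, i.e., F + λG has r linearly independent first partial derivatives. -/
/-!
Let `P_F : K^r → D` send `a` to `(∑ aᵢxᵢ)∘F = ∑ aᵢ ∂ᵢF`. Then `dim R_1∘(F + λG) < r` exactly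
when `P_F + λ P_G` has a nonzero kernel vector `a`, i.e. when `(a, λa)` lies in
`N = ker (P_F, P_G) ⊆ K^r × K^r`, and the hypothesis on `R_1∘F + R_1∘G` says `dim N ≤ 2`.
Given three such `λ` with kernel vectors `a₁, a₂, a₃`: if `a₁, a₂` are independent, then
`(a₁, λ₁a₁), (a₂, λ₂a₂)` span `N`, which forces `a₃ = 0`; otherwise `a₂` is killed by both
`P_F + λ₁P_G` and `P_F + λ₂P_G`, hence by `P_F` and `P_G`. The form `∑ aᵢxᵢ` (for `a = a₂`)
then annihilates `F`, `G` and all their derivatives, including `R_{j-1}∘⟨F,G⟩ = D_1`; but it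
sends `X_k` to `a_k`, so `a = 0`.
-/

open MvPolynomial

/-- The partial derivative endomorphisms commute. -/
theorem pderiv_endo_comm {K : Type*} [CommSemiring K] {r : ℕ} (i j : Fin r)
    (p : MvPolynomial (Fin r) K) :
    pderiv i (pderiv j p) = pderiv j (pderiv i p) := by
  induction p using MvPolynomial.induction_on with
  | C a => simp
  | add p q hp hq => simp [hp, hq]
  | mul_X p k hp =>
      have hX : ∀ a b c : Fin r,
          pderiv a (pderiv b (X c : MvPolynomial (Fin r) K)) = 0 := by
        intro a b c
        rcases eq_or_ne c b with h | h
        · subst h; rw [pderiv_X_self]; exact pderiv_one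
        · rw [pderiv_X_of_ne h, map_zero]
      simp only [pderiv_mul, map_add, pderiv_mul, hp, hX]
      ring

/-- The apolarity action of `R = K[x_1,…,x_r]` on `D = K[X_1,…,X_r]` by
partial differentiation, as an algebra map to endomorphisms. -/
noncomputable def apolHom (K : Type*) [CommSemiring K] (r : ℕ) :
    MvPolynomial (Fin r) K →ₐ[K] Module.End K (MvPolynomial (Fin r) K) :=
  letI : CommSemiring
      (Algebra.adjoin K (Set.range fun i : Fin r =>
        ((pderiv i).toLinearMap : Module.End K (MvPolynomial (Fin r) K)))) :=
    Algebra.adjoinCommSemiringOfComm K (by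
      rintro a ⟨i, rfl⟩ b ⟨j, rfl⟩
      exact LinearMap.ext fun p => pderiv_endo_comm i j p)
  (Algebra.adjoin K _).val.comp
    (aeval fun i : Fin r =>
      (⟨(pderiv i).toLinearMap, Algebra.subset_adjoin (Set.mem_range_self i)⟩ :
        Algebra.adjoin K (Set.range fun i : Fin r =>
          ((pderiv i).toLinearMap : Module.End K (MvPolynomial (Fin r) K)))))

/-- `h ∘ F`, the differentiation action. -/
noncomputable def apol {K : Type*} [CommSemiring K] {r : ℕ}
    (h F : MvPolynomial (Fin r) K) : MvPolynomial (Fin r) K :=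
  apolHom K r h F

/-- The annihilator ideal of a form `F`. -/
noncomputable def annIdeal {K : Type*} [CommSemiring K] {r : ℕ}
    (F : MvPolynomial (Fin r) K) : Ideal (MvPolynomial (Fin r) K) where
  carrier := {h | apol h F = 0}
  add_mem' := by
    intro a b ha hb
    simp only [Set.mem_setOf_eq, apol, map_add, LinearMap.add_apply] at *
    rw [ha, hb, add_zero]
  zero_mem' := by simp [apol]
  smul_mem' := by
    intro c x hx
    simp only [Set.mem_setOf_eq, apol, smul_eq_mul, map_mul, Module.End.mul_apply] at *
    rw [hx, map_zero]

/-- The annihilator ideal of a set of forms. -/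
noncomputable def annSet {K : Type*} [CommSemiring K] {r : ℕ}
    (W : Set (MvPolynomial (Fin r) K)) : Ideal (MvPolynomial (Fin r) K) where
  carrier := {h | ∀ F ∈ W, apol h F = 0}
  add_mem' := by
    intro a b ha hb F hF
    have h1 := ha F hF
    have h2 := hb F hF
    simp only [apol] at h1 h2 ⊢
    rw [map_add, LinearMap.add_apply, h1, h2, add_zero]
  zero_mem' := by intro F hF; simp [apol]
  smul_mem' := by
    intro c x hx F hF
    have h1 := hx F hF
    simp only [apol] at h1 ⊢
    rw [smul_eq_mul, map_mul, Module.End.mul_apply, h1, map_zero]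

/-- `h ↦ h ∘ F` as a `K`-linear map. -/
noncomputable def apolMap {K : Type*} [CommSemiring K] {r : ℕ}
    (F : MvPolynomial (Fin r) K) :
    MvPolynomial (Fin r) K →ₗ[K] MvPolynomial (Fin r) K where
  toFun h := apol h F
  map_add' a b := by simp [apol, map_add]
  map_smul' c a := by simp [apol, map_smul]

/-- `R_u ∘ F`, the space of `u`-th order partial derivatives of `F`. -/
noncomputable def derivSpace {K : Type*} [CommSemiring K] {r : ℕ}
    (F : MvPolynomial (Fin r) K) (u : ℕ) :
    Submodule K (MvPolynomial (Fin r) K) :=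
  Submodule.map (apolMap F) (homogeneousSubmodule (Fin r) K u)

/-- The degree-`i` part of an ideal `I`, as a subspace of `R_i`. -/
noncomputable def idealPiece {K : Type*} [CommSemiring K] {r : ℕ}
    (I : Ideal (MvPolynomial (Fin r) K)) (i : ℕ) :
    Submodule K (homogeneousSubmodule (Fin r) K i) :=
  Submodule.comap (homogeneousSubmodule (Fin r) K i).subtype (I.restrictScalars K)

/-- The Hilbert function of `R/I` in degree `i` (for a homogeneous ideal `I`):
`dim_K (R_i / I_i)`. -/
noncomputable def hilb {K : Type*} [Field K] {r : ℕ}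
    (I : Ideal (MvPolynomial (Fin r) K)) (i : ℕ) : ℕ :=
  Module.finrank K ((homogeneousSubmodule (Fin r) K i) ⧸ idealPiece I i)

section Pencil

open LinearMap Module

variable {K V W : Type*} [Field K] [AddCommGroup V] [Module K V] [AddCommGroup W] [Module K W]
  {P Q : V →ₗ[K] W}

theorem LinearMap.mem_ker_inf_of_mem_ker_add_smul {c₁ c₂ : K} (hc : c₁ ≠ c₂) {a : V}
    (h₁ : a ∈ ker (P + c₁ • Q)) (h₂ : a ∈ ker (P + c₂ • Q)) : a ∈ ker P ⊓ ker Q := by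
  simp only [mem_ker, add_apply, smul_apply] at h₁ h₂
  have hQ : Q a = 0 := by
    have : (c₁ - c₂) • Q a = 0 := by
      calc (c₁ - c₂) • Q a = (P a + c₁ • Q a) - (P a + c₂ • Q a) := by module
        _ = 0 := by rw [h₁, h₂, sub_zero]
    exact (smul_eq_zero.mp this).resolve_left (sub_ne_zero.mpr hc)
  exact ⟨by simpa [hQ] using h₁, hQ⟩

theorem LinearMap.mem_ker_add_smul_iff {c : K} {a : V} :
    a ∈ ker (P + c • Q) ↔ (a, c • a) ∈ ker (P.coprod Q) := by
  simp

theorem LinearMap.eq_zero_of_mem_ker_add_smul [FiniteDimensional K V]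
    (hN : finrank K (ker (P.coprod Q)) ≤ 2) {c₁ c₂ c₃ : K} (h₁₃ : c₁ ≠ c₃) (h₂₃ : c₂ ≠ c₃)
    {a₁ a₂ a₃ : V} (ha₁ : a₁ ∈ ker (P + c₁ • Q)) (ha₂ : a₂ ∈ ker (P + c₂ • Q))
    (ha₃ : a₃ ∈ ker (P + c₃ • Q)) (hind : LinearIndependent K ![a₁, a₂]) : a₃ = 0 := by
  rw [mem_ker_add_smul_iff] at ha₁ ha₂ ha₃
  have hind' : LinearIndependent K ![(a₁, c₁ • a₁), (a₂, c₂ • a₂)] := by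
    rw [LinearIndependent.pair_iff] at hind ⊢
    exact fun s t h => hind s t (by simpa using congrArg Prod.fst h)
  have hspan : Submodule.span K {(a₁, c₁ • a₁), (a₂, c₂ • a₂)} = ker (P.coprod Q) := by
    refine Submodule.eq_of_le_of_finrank_le ?_ ?_
    · rw [Submodule.span_le, Set.insert_subset_iff, Set.singleton_subset_iff]
      exact ⟨ha₁, ha₂⟩
    · have h2 := finrank_span_eq_card hind'
      rw [Matrix.range_cons, Matrix.range_cons, Matrix.range_empty, Set.union_empty,
        Set.singleton_union, Fintype.card_fin] at h2
      omega
  obtain ⟨s, t, hst⟩ := Submodule.mem_span_pair.mp (hspan ▸ ha₃)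
  have hfst : s • a₁ + t • a₂ = a₃ := congrArg Prod.fst hst
  have hsnd : s • c₁ • a₁ + t • c₂ • a₂ = c₃ • a₃ := congrArg Prod.snd hst
  obtain ⟨hs, ht⟩ := LinearIndependent.pair_iff.mp hind (s * (c₁ - c₃)) (t * (c₂ - c₃)) (by
    rw [← hfst] at hsnd
    linear_combination (norm := module) hsnd)
  have hs0 : s = 0 := by simpa [sub_eq_zero, h₁₃] using hs
  have ht0 : t = 0 := by simpa [sub_eq_zero, h₂₃] using ht
  rw [← hfst, hs0, ht0, zero_smul, zero_smul, add_zero]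

theorem LinearMap.finite_setOf_ker_add_smul_ne_bot [FiniteDimensional K V]
    (hN : finrank K (ker (P.coprod Q)) ≤ 2) (hPQ : ker P ⊓ ker Q = ⊥) :
    {c : K | ker (P + c • Q) ≠ ⊥}.Finite := by
  classical
  by_contra hinf
  obtain ⟨t, hts, ht⟩ := Set.Infinite.exists_subset_card_eq hinf 3
  obtain ⟨c₁, c₂, c₃, h₁₂, h₁₃, h₂₃, rfl⟩ := Finset.card_eq_three.mp ht
  obtain ⟨a₁, ha₁, ha₁0⟩ := (Submodule.ne_bot_iff _).mp (@hts c₁ (by simp))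
  obtain ⟨a₂, ha₂, ha₂0⟩ := (Submodule.ne_bot_iff _).mp (@hts c₂ (by simp))
  obtain ⟨a₃, ha₃, ha₃0⟩ := (Submodule.ne_bot_iff _).mp (@hts c₃ (by simp))
  by_cases hind : LinearIndependent K ![a₁, a₂]
  · exact ha₃0 (eq_zero_of_mem_ker_add_smul hN h₁₃ h₂₃ ha₁ ha₂ ha₃ hind)
  · obtain ⟨μ, rfl⟩ : ∃ μ : K, μ • a₁ = a₂ := by
      simpa [LinearIndependent.pair_iff' ha₁0] using hind
    have hboth := mem_ker_inf_of_mem_ker_add_smul h₁₂ (Submodule.smul_mem _ μ ha₁) ha₂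
    exact ha₂0 (by simpa [hPQ] using hboth)

end Pencil

section Apolarity

open LinearMap Module

variable {K : Type*} [CommSemiring K] {r : ℕ}

theorem apolHom_X (i : Fin r) : apolHom K r (X i) = (pderiv i).toLinearMap := by
  simp [apolHom]

theorem apol_comm (p q F : MvPolynomial (Fin r) K) :
    apol p (apol q F) = apol q (apol p F) := by
  simp only [apol, ← Module.End.mul_apply, ← map_mul, mul_comm]

theorem apol_linearCombination_X_X (a : Fin r → K) (k : Fin r) :
    apol (Fintype.linearCombination K X a) (X k : MvPolynomial (Fin r) K) = C (a k) := by
  simp [Fintype.linearCombination_apply, apol, apolHom_X, pderiv_X, Pi.single_apply,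
    smul_eq_C_mul]

theorem apol_eq_zero_of_mem_derivSpace {ℓ F w : MvPolynomial (Fin r) K} {u : ℕ}
    (hℓ : apol ℓ F = 0) (hw : w ∈ derivSpace F u) : apol ℓ w = 0 := by
  obtain ⟨g, -, rfl⟩ := hw
  change apol ℓ (apol g F) = 0
  rw [apol_comm, hℓ, apol, map_zero]

noncomputable def firstPartials (F : MvPolynomial (Fin r) K) :
    (Fin r → K) →ₗ[K] MvPolynomial (Fin r) K :=
  apolMap F ∘ₗ Fintype.linearCombination K X

theorem range_firstPartials (F : MvPolynomial (Fin r) K) :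
    range (firstPartials F) = derivSpace F 1 := by
  rw [firstPartials, range_comp, Fintype.range_linearCombination,
    ← homogeneousSubmodule_one_eq_span_X, derivSpace]

theorem firstPartials_add_smul (F G : MvPolynomial (Fin r) K) (c : K) :
    firstPartials (F + c • G) = firstPartials F + c • firstPartials G := by
  ext a
  simp [firstPartials, apolMap, apol]

end Apolarity

section Field

open LinearMap Module

variable {K : Type*} [Field K] {r : ℕ}

theorem finrank_derivSpace_one_eq_iff (F : MvPolynomial (Fin r) K) :
    finrank K (derivSpace F 1) = r ↔ ker (firstPartials F) = ⊥ := by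
  have := finrank_range_add_finrank_ker (firstPartials F)
  rw [range_firstPartials, finrank_fin_fun] at this
  rw [← Submodule.finrank_eq_zero]
  omega

theorem finrank_ker_coprod_firstPartials_le_two {F G : MvPolynomial (Fin r) K}
    (h : 2 * r - 2 ≤ finrank K ↥(derivSpace F 1 ⊔ derivSpace G 1)) :
    finrank K (ker ((firstPartials F).coprod (firstPartials G))) ≤ 2 := by
  have := finrank_range_add_finrank_ker ((firstPartials F).coprod (firstPartials G))
  rw [range_coprod, range_firstPartials, range_firstPartials, finrank_prod, finrank_fin_fun] at this
  omega

theorem ker_firstPartials_inf_eq_bot {F G : MvPolynomial (Fin r) K} {u : ℕ}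
    (h : homogeneousSubmodule (Fin r) K 1 ≤ derivSpace F u ⊔ derivSpace G u) :
    ker (firstPartials F) ⊓ ker (firstPartials G) = ⊥ := by
  rw [eq_bot_iff]
  rintro a ⟨haF, haG⟩
  rw [Submodule.mem_bot]
  ext k
  obtain ⟨w₁, hw₁, w₂, hw₂, hw⟩ :=
    Submodule.mem_sup.mp (h ((mem_homogeneousSubmodule 1 _).mpr (isHomogeneous_X K k)))
  have hXk : apol (Fintype.linearCombination K X a) (X k : MvPolynomial (Fin r) K) = 0 := by
    rw [← hw, apol, map_add, ← apol, ← apol, apol_eq_zero_of_mem_derivSpace haF hw₁,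
      apol_eq_zero_of_mem_derivSpace haG hw₂, add_zero]
  simpa [apol_linearCombination_X_X] using hXk

end Field

theorem generic_full_first_partials_general {K : Type*} [Field K] {r j : ℕ}
    (F G : MvPolynomial (Fin r) K)
    (h1 : 2 * r - 2 ≤ Module.finrank K ↥(derivSpace F 1 ⊔ derivSpace G 1))
    (h2 : derivSpace F (j - 1) ⊔ derivSpace G (j - 1)
        = homogeneousSubmodule (Fin r) K 1) :
    {c : K | ¬ Module.finrank K ↥(derivSpace (F + c • G) 1) = r}.Finite := by
  simp only [finrank_derivSpace_one_eq_iff, firstPartials_add_smul]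
  exact LinearMap.finite_setOf_ker_add_smul_ne_bot (finrank_ker_coprod_firstPartials_le_two h1)
    (ker_firstPartials_inf_eq_bot h2.ge)

/-- Corollary 2.4: if `F, G` together have at least `2r - 2` linearly
independent first partials and involve all `r` variables (i.e. `R_{j-1}∘⟨F,G⟩` spans
`D_1`), then for all but finitely many `λ ∈ K`, `F + λG` has `r` linearly independent
first partial derivatives. -/
theorem generic_full_first_partials {K : Type*} [Field K] [CharZero K] {r j : ℕ}
    (hr : 1 ≤ r) (hj : 0 < j)
    (F G : MvPolynomial (Fin r) K) (hF : F.IsHomogeneous j) (hG : G.IsHomogeneous j)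
    (h1 : 2 * r - 2 ≤ Module.finrank K ↥(derivSpace F 1 ⊔ derivSpace G 1))
    (h2 : derivSpace F (j - 1) ⊔ derivSpace G (j - 1)
        = homogeneousSubmodule (Fin r) K 1) :
    {c : K | ¬ Module.finrank K ↥(derivSpace (F + c • G) 1) = r}.Finite :=
  generic_full_first_partials_general F G h1 h2
end

section
/- Let W ⊆ D_j be a t-dimensional space of degree-j forms with t ≥ 2, let A = R/Ann(W), and let V ⊂ W be a codimension-one subspace with B_V = R/Ann(V). Then there is a surjection of graded R-modules A → B_V whose kernel C satisfies: the dual module of C is a cyclic R-module (generated by a single element). In particular H(A) = H(B_V) + H(C). -/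
open MvPolynomial

/-- Type synonym: `D` viewed as a module over `R` via the apolarity action. -/
def DMod (K : Type*) [CommSemiring K] (r : ℕ) := MvPolynomial (Fin r) K

noncomputable instance {K : Type*} [CommSemiring K] {r : ℕ} : AddCommMonoid (DMod K r) :=
  inferInstanceAs (AddCommMonoid (MvPolynomial (Fin r) K))

/-- The `R`-module structure on `D` given by `h • F = h ∘ F`. -/
noncomputable instance {K : Type*} [CommSemiring K] {r : ℕ} :
    Module (MvPolynomial (Fin r) K) (DMod K r) :=
  Module.compHom (MvPolynomial (Fin r) K) (apolHom K r).toRingHom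

/-- `R ∘ W ⊆ D`, the `R`-submodule of `D` generated by a subspace `W` of forms
(the dualizing module of `R/Ann W`). -/
noncomputable def dualMod {K : Type*} [CommSemiring K] {r : ℕ}
    (W : Submodule K (MvPolynomial (Fin r) K)) :
    Submodule (MvPolynomial (Fin r) K) (DMod K r) :=
  Submodule.span (MvPolynomial (Fin r) K)
    ((fun F => (F : DMod K r)) '' (W : Set (MvPolynomial (Fin r) K)))

noncomputable instance {K : Type*} [CommRing K] {r : ℕ} : AddCommGroup (DMod K r) :=
  inferInstanceAs (AddCommGroup (MvPolynomial (Fin r) K))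

/-!
Since `V` has codimension one in `W`, we have `W = V + K F` for some form `F`. Taking the
`R`-submodule `R ∘ -` generated by a subspace is left adjoint to taking the forms lying in a
submodule, so it preserves sums: `R ∘ W = R ∘ V + R ∘ F`, and the class of `F` generates
`(R ∘ W)/(R ∘ V)`. The Hilbert function identity is additivity of dimension in each degree,
applied to `Ann W ⊆ Ann V`.
-/

theorem Submodule.exists_sup_span_singleton_eq_of_finrank_add_one {K E : Type*} [DivisionRing K]
    [AddCommGroup E] [Module K E] {V W : Submodule K E}
    (hVW : V ≤ W) (hdim : Module.finrank K V + 1 = Module.finrank K W) :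
    ∃ F, V ⊔ K ∙ F = W := by
  have : FiniteDimensional K W := Module.finite_of_finrank_pos (by omega)
  obtain ⟨F, hFW, hFV⟩ := SetLike.exists_of_lt (hVW.lt_of_ne (by rintro rfl; omega))
  have hle : V ⊔ K ∙ F ≤ W := sup_le hVW ((Submodule.span_singleton_le_iff_mem _ _).2 hFW)
  have hlt : V < V ⊔ K ∙ F := le_sup_left.lt_of_ne fun h =>
    hFV (h ▸ Submodule.mem_sup_right (Submodule.mem_span_singleton_self F))
  have : FiniteDimensional K ↥(V ⊔ K ∙ F) := Submodule.finiteDimensional_of_le hle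
  exact ⟨F, Submodule.eq_of_le_of_finrank_le hle (by
    have := Submodule.finrank_lt_finrank_of_lt hlt; omega)⟩

theorem Submodule.exists_span_singleton_quotient_eq_top_of_sup_eq {R M : Type*} [Ring R]
    [AddCommGroup M] [Module R M] {N P : Submodule R M} {g : M} (hNP : N ≤ P)
    (hg : N ⊔ R ∙ g = P) :
    ∃ x : P ⧸ N.comap P.subtype, R ∙ x = ⊤ := by
  have hgP : g ∈ P := hg ▸ Submodule.mem_sup_right (Submodule.mem_span_singleton_self g)
  refine ⟨Submodule.Quotient.mk ⟨g, hgP⟩, ?_⟩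
  rw [← Submodule.mkQ_apply, ← Set.image_singleton, ← Submodule.map_span,
    Submodule.map_mkQ_eq_top]
  apply Submodule.map_injective_of_injective P.injective_subtype
  rw [Submodule.map_sup, Submodule.map_comap_subtype, inf_eq_right.2 hNP, Submodule.map_span,
    Set.image_singleton, Submodule.map_subtype_top]
  exact hg

section Apolarity

variable {K : Type*} [CommSemiring K] {r : ℕ}

theorem apolHom_C (c : K) (F : MvPolynomial (Fin r) K) : apolHom K r (C c) F = c • F := by
  rw [← algebraMap_eq, AlgHom.commutes, Module.algebraMap_end_apply]

def formsOf (N : Submodule (MvPolynomial (Fin r) K) (DMod K r)) :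
    Submodule K (MvPolynomial (Fin r) K) where
  carrier := {F | (show DMod K r from F) ∈ N}
  add_mem' := N.add_mem
  zero_mem' := N.zero_mem
  smul_mem' c F hF := apolHom_C c F ▸ N.smul_mem (C c) hF

theorem gc_dualMod_formsOf : GaloisConnection (dualMod (K := K) (r := r)) formsOf :=
  fun _ _ => Submodule.span_le.trans Set.image_subset_iff

theorem dualMod_sup (V W : Submodule K (MvPolynomial (Fin r) K)) :
    dualMod (V ⊔ W) = dualMod V ⊔ dualMod W :=
  gc_dualMod_formsOf.l_sup

theorem dualMod_mono {V W : Submodule K (MvPolynomial (Fin r) K)} (h : V ≤ W) :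
    dualMod V ≤ dualMod W :=
  gc_dualMod_formsOf.monotone_l h

theorem dualMod_span_singleton (F : MvPolynomial (Fin r) K) :
    dualMod (K ∙ F) = Submodule.span (MvPolynomial (Fin r) K) ({F} : Set (DMod K r)) :=
  le_antisymm
    ((gc_dualMod_formsOf _ _).2 <| (Submodule.span_singleton_le_iff_mem _ _).2 <|
      Submodule.mem_span_singleton_self (R := MvPolynomial (Fin r) K) (M := DMod K r) F)
    ((Submodule.span_singleton_le_iff_mem _ _).2 <|
      Submodule.subset_span ⟨F, Submodule.mem_span_singleton_self F, rfl⟩)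

end Apolarity

theorem Submodule.finrank_quotient_eq_add_sub {K U : Type*} [DivisionRing K] [AddCommGroup U]
    [Module K U] [FiniteDimensional K U] {P Q : Submodule K U} (h : P ≤ Q) :
    Module.finrank K (U ⧸ P) =
      Module.finrank K (U ⧸ Q) + (Module.finrank K Q - Module.finrank K P) := by
  have := P.finrank_quotient_add_finrank
  have := Q.finrank_quotient_add_finrank
  have := Submodule.finrank_mono h
  omega

theorem hilb_eq_add_sub {K : Type*} [Field K] {r : ℕ}
    {I J : Ideal (MvPolynomial (Fin r) K)} (h : I ≤ J) (i : ℕ) :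
    hilb I i = hilb J i
      + (Module.finrank K (idealPiece J i) - Module.finrank K (idealPiece I i)) :=
  have : FiniteDimensional K (homogeneousSubmodule (Fin r) K i) :=
    Module.Finite.iff_fg.2 (homogeneousSubmodule_fg _ _ i)
  Submodule.finrank_quotient_eq_add_sub fun _ hp => h hp

theorem codim_one_quotient_general {K : Type*} [Field K] {r t : ℕ}
    (W V : Submodule K (MvPolynomial (Fin r) K))
    (hdimW : Module.finrank K W = t) (hVW : V ≤ W)
    (hdimV : Module.finrank K V + 1 = t)
    (hle : (annSet (W : Set (MvPolynomial (Fin r) K)) :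
        Submodule (MvPolynomial (Fin r) K) (MvPolynomial (Fin r) K))
      ≤ Submodule.comap LinearMap.id
          (annSet (V : Set (MvPolynomial (Fin r) K)) :
            Submodule (MvPolynomial (Fin r) K) (MvPolynomial (Fin r) K))) :
    Function.Surjective
      (Submodule.mapQ
        (annSet (W : Set (MvPolynomial (Fin r) K)) :
          Submodule (MvPolynomial (Fin r) K) (MvPolynomial (Fin r) K))
        (annSet (V : Set (MvPolynomial (Fin r) K)) :
          Submodule (MvPolynomial (Fin r) K) (MvPolynomial (Fin r) K))
        LinearMap.id hle) ∧
    (∃ x : ↥(dualMod W) ⧸ Submodule.comap (dualMod W).subtype (dualMod V),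
      Submodule.span (MvPolynomial (Fin r) K) {x} = ⊤) ∧
    (∀ i : ℕ, hilb (annSet (W : Set (MvPolynomial (Fin r) K))) i
        = hilb (annSet (V : Set (MvPolynomial (Fin r) K))) i
          + (Module.finrank K ↥(idealPiece (annSet (V : Set (MvPolynomial (Fin r) K))) i)
            - Module.finrank K ↥(idealPiece (annSet (W : Set (MvPolynomial (Fin r) K))) i))) := by
  refine ⟨Submodule.factor_surjective hle, ?_, hilb_eq_add_sub hle⟩
  obtain ⟨F, hF⟩ :=
    Submodule.exists_sup_span_singleton_eq_of_finrank_add_one hVW (hdimV.trans hdimW.symm)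
  have hdual : dualMod W = dualMod V ⊔ Submodule.span _ ({F} : Set (DMod K r)) := by
    rw [← hF, dualMod_sup, dualMod_span_singleton]
  exact Submodule.exists_span_singleton_quotient_eq_top_of_sup_eq (dualMod_mono hVW) hdual.symm

/-- Lemma 2.5: for `W ⊆ D_j` of dimension `t ≥ 2`, `A = R/Ann W`, and a
codimension-one subspace `V ⊂ W` with `B_V = R/Ann V`, the canonical surjection
`A → B_V` has kernel `C` whose dual module `(R∘W)/(R∘V)` is a cyclic `R`-module;
in particular `H(A) = H(B_V) + H(C)`. -/
theorem codim_one_quotient {K : Type*} [Field K] [CharZero K] {r j t : ℕ} (ht : 2 ≤ t)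
    (W V : Submodule K (MvPolynomial (Fin r) K))
    (hWhom : ∀ F ∈ W, MvPolynomial.IsHomogeneous F j)
    (hdimW : Module.finrank K W = t) (hVW : V ≤ W)
    (hdimV : Module.finrank K V + 1 = t)
    (hle : (annSet (W : Set (MvPolynomial (Fin r) K)) :
        Submodule (MvPolynomial (Fin r) K) (MvPolynomial (Fin r) K))
      ≤ Submodule.comap LinearMap.id
          (annSet (V : Set (MvPolynomial (Fin r) K)) :
            Submodule (MvPolynomial (Fin r) K) (MvPolynomial (Fin r) K))) :
    Function.Surjective
      (Submodule.mapQ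
        (annSet (W : Set (MvPolynomial (Fin r) K)) :
          Submodule (MvPolynomial (Fin r) K) (MvPolynomial (Fin r) K))
        (annSet (V : Set (MvPolynomial (Fin r) K)) :
          Submodule (MvPolynomial (Fin r) K) (MvPolynomial (Fin r) K))
        LinearMap.id hle) ∧
    (∃ x : ↥(dualMod W) ⧸ Submodule.comap (dualMod W).subtype (dualMod V),
      Submodule.span (MvPolynomial (Fin r) K) {x} = ⊤) ∧
    (∀ i : ℕ, hilb (annSet (W : Set (MvPolynomial (Fin r) K))) i
        = hilb (annSet (V : Set (MvPolynomial (Fin r) K))) i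
          + (Module.finrank K ↥(idealPiece (annSet (V : Set (MvPolynomial (Fin r) K))) i)
            - Module.finrank K ↥(idealPiece (annSet (W : Set (MvPolynomial (Fin r) K))) i))) :=
  codim_one_quotient_general W V hdimW hVW hdimV hle
end

section
/- Let A = R/Ann(F,G) be a type two level algebra of socle degree j and fix 0 < i < j. There do not exist two distinct values λ_1 ≠ λ_2 in K ∪ {∞} such that both H(R/Ann(F_{λ_1}))_i < H(A)_i/2 and H(R/Ann(F_{λ_2}))_i < H(A)_i/2, where F_λ = F + λG and F_∞ = G. -/
/-!
If `λ₁ ≠ λ₂`, then `F_{λ₁}` and `F_{λ₂}` span `⟨F, G⟩`, so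
`Ann F_{λ₁} ∩ Ann F_{λ₂} = Ann F ∩ Ann G`. Since the codimension of an intersection of two
subspaces is at most the sum of their codimensions,
`H(A)_i ≤ H(R/Ann F_{λ₁})_i + H(R/Ann F_{λ₂})_i`, and the two summands cannot both be less
than `H(A)_i / 2`.
-/

open MvPolynomial

/-- `F_λ = F + λG`, with `λ = ∞` encoded by `none` and `F_∞ = G`. -/
def pencil {K V : Type*} [Field K] [AddCommGroup V] [Module K V] (F G : V) (o : Option K) : V :=
  o.elim G fun c => F + c • G

section Pencil

variable {K V : Type*} [Field K] [AddCommGroup V] [Module K V]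

theorem pencil_mem {N : Submodule K V} {F G : V} (hF : F ∈ N) (hG : G ∈ N) (o : Option K) :
    pencil F G o ∈ N := by
  cases o with
  | none => exact hG
  | some c => exact N.add_mem hF (N.smul_mem c hG)

theorem pencil_some_mem_iff {N : Submodule K V} {G : V} (hG : G ∈ N) (F : V) (c : K) :
    pencil F G (some c) ∈ N ↔ F ∈ N :=
  N.add_mem_iff_left (N.smul_mem c hG)

theorem mem_of_pencil_some_mem {N : Submodule K V} {F G : V} {c₁ c₂ : K} (hc : c₁ ≠ c₂)
    (h₁ : pencil F G (some c₁) ∈ N) (h₂ : pencil F G (some c₂) ∈ N) : G ∈ N := by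
  have hsub : (c₁ - c₂) • G ∈ N := by
    convert N.sub_mem h₁ h₂ using 1
    simp only [pencil, Option.elim_some, sub_smul]
    abel
  exact (N.smul_mem_iff (sub_ne_zero.mpr hc)).mp hsub

theorem pencil_mem_and_pencil_mem_iff (N : Submodule K V) (F G : V) {o₁ o₂ : Option K}
    (hne : o₁ ≠ o₂) : pencil F G o₁ ∈ N ∧ pencil F G o₂ ∈ N ↔ F ∈ N ∧ G ∈ N := by
  constructor
  · rcases o₁ with _ | c₁ <;> rcases o₂ with _ | c₂
    · exact absurd rfl hne
    · rintro ⟨hG, hc⟩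
      exact ⟨(pencil_some_mem_iff hG F c₂).mp hc, hG⟩
    · rintro ⟨hc, hG⟩
      exact ⟨(pencil_some_mem_iff hG F c₁).mp hc, hG⟩
    · rintro ⟨h₁, h₂⟩
      have hG := mem_of_pencil_some_mem (Option.some_injective _ |>.ne_iff.mp hne) h₁ h₂
      exact ⟨(pencil_some_mem_iff hG F c₁).mp h₁, hG⟩
  · rintro ⟨hF, hG⟩
    exact ⟨pencil_mem hF hG o₁, pencil_mem hF hG o₂⟩

end Pencil

theorem annIdeal_pencil_inf_annIdeal_pencil {K : Type*} [Field K] {r : ℕ}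
    (F G : MvPolynomial (Fin r) K) {o₁ o₂ : Option K} (hne : o₁ ≠ o₂) :
    annIdeal (pencil F G o₁) ⊓ annIdeal (pencil F G o₂) = annIdeal F ⊓ annIdeal G := by
  ext h
  exact pencil_mem_and_pencil_mem_iff (LinearMap.ker (apolHom K r h)) F G hne

theorem Submodule.finrank_quotient_inf_le {K V : Type*} [Field K] [AddCommGroup V] [Module K V]
    (P Q : Submodule K V) :
    Module.finrank K (V ⧸ P ⊓ Q) ≤ Module.finrank K (V ⧸ P) + Module.finrank K (V ⧸ Q) := by
  by_cases hfin : Module.Finite K (V ⧸ P ⊓ Q)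
  swap
  · rw [Module.finrank_of_not_finite hfin]
    exact Nat.zero_le _
  have : Module.Finite K (V ⧸ P) :=
    Module.Finite.of_surjective _ (Submodule.factor_surjective (inf_le_left : P ⊓ Q ≤ P))
  have : Module.Finite K (V ⧸ Q) :=
    Module.Finite.of_surjective _ (Submodule.factor_surjective (inf_le_right : P ⊓ Q ≤ Q))
  let f : V ⧸ P ⊓ Q →ₗ[K] (V ⧸ P) × (V ⧸ Q) :=
    (P ⊓ Q).liftQ (P.mkQ.prod Q.mkQ) (by simp [LinearMap.ker_prod])
  have hf : Function.Injective f := by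
    rw [← LinearMap.ker_eq_bot, Submodule.ker_liftQ_eq_bot']
    simp [LinearMap.ker_prod]
  calc Module.finrank K (V ⧸ P ⊓ Q) ≤ Module.finrank K ((V ⧸ P) × (V ⧸ Q)) :=
        LinearMap.finrank_le_finrank_of_injective hf
    _ = _ := Module.finrank_prod

theorem hilb_inf_le {K : Type*} [Field K] {r : ℕ} (I J : Ideal (MvPolynomial (Fin r) K)) (i : ℕ) :
    hilb (I ⊓ J) i ≤ hilb I i + hilb J i :=
  Submodule.finrank_quotient_inf_le (idealPiece I i) (idealPiece J i)

theorem no_two_small_members_general {K : Type*} [Field K] {r i : ℕ}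
    (F G : MvPolynomial (Fin r) K)
    (o₁ o₂ : Option K) (hne : o₁ ≠ o₂) :
    ¬ (2 * hilb (annIdeal (o₁.elim G fun c => F + c • G)) i
          < hilb (annIdeal F ⊓ annIdeal G) i
        ∧ 2 * hilb (annIdeal (o₂.elim G fun c => F + c • G)) i
          < hilb (annIdeal F ⊓ annIdeal G) i) := by
  rintro ⟨h₁, h₂⟩
  have hsub := hilb_inf_le (annIdeal (pencil F G o₁)) (annIdeal (pencil F G o₂)) i
  rw [annIdeal_pencil_inf_annIdeal_pencil F G hne, pencil, pencil] at hsub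
  omega

/-- there are no two distinct members of the pencil `F_λ = F + λG`
(`F_∞ = G`) with `H(R/Ann F_λ)_i < H(A)_i / 2`. -/
theorem no_two_small_members {K : Type*} [Field K] [CharZero K] {r j i : ℕ}
    (hi : 0 < i) (hij : i < j)
    (F G : MvPolynomial (Fin r) K) (hF : F.IsHomogeneous j) (hG : G.IsHomogeneous j)
    (hind : LinearIndependent K ![F, G])
    (o₁ o₂ : Option K) (hne : o₁ ≠ o₂) :
    ¬ (2 * hilb (annIdeal (o₁.elim G fun c => F + c • G)) i
          < hilb (annIdeal F ⊓ annIdeal G) i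
        ∧ 2 * hilb (annIdeal (o₂.elim G fun c => F + c • G)) i
          < hilb (annIdeal F ⊓ annIdeal G) i) :=
  no_two_small_members_general F G o₁ o₂ hne
end

section
/- Let r = 3, R = K[x,y,z], D = K[X,Y,Z], and for parameters a, b ∈ K with (a,b) ≠ (0,0) set F = X³Y + X²Z² + aXZ³ + bYZ³ and G = X³Z + X²Y² + X²YZ + 3aXY²Z + bY³Z. Then for every λ ∈ K, the element y² − λz² ∈ R_2 annihilates F + λG: (y² − λz²)∘(F + λG) = 0. Consequently dim_K R_2∘(F+λG) ≤ 5 < 6, so the generic Gorenstein quotient R/Ann(F+λG) is not compressed of socle degree 4. -/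
open MvPolynomial

/-! ∂_y² kills `F`, ∂_z² kills `G`, and ∂_y² G = ∂_z² F = 2X² + 6aXZ + 6bYZ, so `y² − λz²`
annihilates every member `F + λG` of the pencil. A nonzero quadric in the kernel of
`R_2 → R_2∘(F + λG)` forces the image to have dimension below `dim R_2 = 6`. -/

@[simp]
lemma Derivation.map_ofNat {R A M : Type*} [CommSemiring R] [CommSemiring A] [Algebra R A]
    [AddCommMonoid M] [Module A M] [Module R M] (D : Derivation R A M) (n : ℕ) [n.AtLeastTwo] :
    D (no_index (OfNat.ofNat n)) = 0 :=
  D.map_natCast n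

lemma finrank_homogeneousSubmodule {K σ : Type*} [Field K] [Fintype σ] (n : ℕ) :
    Module.finrank K (homogeneousSubmodule σ K n) = (Fintype.card σ + n - 1).choose n := by
  classical
  have hs : {d : σ →₀ ℕ | d.degree = n} =
      ((Finset.univ : Finset σ).finsuppAntidiag n : Set (σ →₀ ℕ)) := by
    ext d; simp [Finsupp.degree_eq_sum]
  rw [homogeneousSubmodule_eq_finsupp_supported, hs, ← restrictSupport,
    Module.finrank_eq_nat_card_basis (basisRestrictSupport K _), Nat.card_coe_set_eq,
    Set.ncard_coe_finset, Finset.card_finsuppAntidiag_nat_eq_choose, Finset.card_univ]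

section Apolarity

variable {K : Type*} [CommRing K] {r : ℕ}

lemma apol_X_sq (i : Fin r) (F : MvPolynomial (Fin r) K) :
    apol (X i ^ 2) F = pderiv i (pderiv i F) := by
  simp [apol, apolHom, sq]

lemma apol_X_sq_sub_smul_X_sq {i j : Fin r} {F G : MvPolynomial (Fin r) K}
    (hFi : pderiv i (pderiv i F) = 0) (hGj : pderiv j (pderiv j G) = 0)
    (hGF : pderiv i (pderiv i G) = pderiv j (pderiv j F)) (c : K) :
    apol (X i ^ 2 - c • X j ^ 2) (F + c • G) = 0 := by
  have hsq := apol_X_sq (K := K) (r := r)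
  unfold apol at hsq ⊢
  rw [map_sub, map_smul, LinearMap.sub_apply, LinearMap.smul_apply, hsq, hsq]
  simp [hFi, hGj, hGF]

lemma X_sq_sub_smul_X_sq_ne_zero [Nontrivial K] {i j : Fin r} (hij : i ≠ j) (c : K) :
    X i ^ 2 - c • X j ^ 2 ≠ (0 : MvPolynomial (Fin r) K) := by
  intro h
  have := congrArg (coeff (Finsupp.single i 2)) h
  simp [X_pow_eq_monomial, coeff_monomial, Finsupp.single_left_inj, hij.symm] at this

end Apolarity

lemma finrank_derivSpace_lt {K : Type*} [Field K] {r u : ℕ} {F h : MvPolynomial (Fin r) K}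
    (hu : h.IsHomogeneous u) (h0 : h ≠ 0) (hF : apol h F = 0) :
    Module.finrank K (derivSpace F u) < Module.finrank K (homogeneousSubmodule (Fin r) K u) := by
  have : FiniteDimensional K (homogeneousSubmodule (Fin r) K u) :=
    Module.Finite.iff_fg.mpr (homogeneousSubmodule_fg _ _ u)
  set f := apolMap F ∘ₗ (homogeneousSubmodule (Fin r) K u).subtype
  have hker : 0 < Module.finrank K (LinearMap.ker f) := by
    refine (Module.finrank_pos_iff_exists_ne_zero (R := K)).mpr
      ⟨(⟨⟨h, hu⟩, hF⟩ : LinearMap.ker f), ?_⟩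
    simpa [Subtype.ext_iff] using h0
  have hrange : derivSpace F u = LinearMap.range f := by
    rw [LinearMap.range_comp, Submodule.range_subtype]; rfl
  rw [hrange, ← LinearMap.finrank_range_add_finrank_ker f]
  omega

theorem example_not_compressed_general {K : Type*} [Field K] (a b : K)
    (F G : MvPolynomial (Fin 3) K)
    (hF : F = (X 0) ^ 3 * X 1 + (X 0) ^ 2 * (X 2) ^ 2 + a • (X 0 * (X 2) ^ 3)
        + b • (X 1 * (X 2) ^ 3))
    (hG : G = (X 0) ^ 3 * X 2 + (X 0) ^ 2 * (X 1) ^ 2 + (X 0) ^ 2 * X 1 * X 2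
        + (3 * a) • (X 0 * (X 1) ^ 2 * X 2) + b • ((X 1) ^ 3 * X 2)) :
    ∀ c : K,
      apol ((X 1) ^ 2 - c • (X 2) ^ 2 : MvPolynomial (Fin 3) K) (F + c • G) = 0 ∧
      Module.finrank K ↥(derivSpace (F + c • G) 2) ≤ 5 := by
  have hFy : pderiv 1 (pderiv 1 F) = 0 := by subst hF; simp [pderiv_X]
  have hGz : pderiv 2 (pderiv 2 G) = 0 := by subst hG; simp [pderiv_X]
  have hGy : pderiv 1 (pderiv 1 G) = pderiv 2 (pderiv 2 F) := by
    subst hF hG; simp [pderiv_X, smul_eq_C_mul, map_ofNat]; ring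
  intro c
  have hann := apol_X_sq_sub_smul_X_sq hFy hGz hGy c
  have hhom : ((X 1) ^ 2 - c • (X 2) ^ 2 : MvPolynomial (Fin 3) K).IsHomogeneous 2 :=
    (isHomogeneous_X_pow 1 2).sub
      (Submodule.smul_mem (homogeneousSubmodule _ K 2) c (isHomogeneous_X_pow 2 2))
  refine ⟨hann, ?_⟩
  have := finrank_derivSpace_lt hhom (X_sq_sub_smul_X_sq_ne_zero (by decide) c) hann
  rw [finrank_homogeneousSubmodule, Fintype.card_fin] at this
  exact Nat.le_of_lt_succ this

/-- Example 2.9: for `F = X³Y + X²Z² + aXZ³ + bYZ³` and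
`G = X³Z + X²Y² + X²YZ + 3aXY²Z + bY³Z` with `(a,b) ≠ (0,0)`,
`(y² - λz²)∘(F + λG) = 0` for every `λ`, hence `dim R_2∘(F + λG) ≤ 5 < 6` and the
Gorenstein quotient `R/Ann(F + λG)` is not compressed of socle degree 4. -/
theorem example_not_compressed {K : Type*} [Field K] [CharZero K] (a b : K)
    (hab : ¬ (a = 0 ∧ b = 0)) (F G : MvPolynomial (Fin 3) K)
    (hF : F = (X 0) ^ 3 * X 1 + (X 0) ^ 2 * (X 2) ^ 2 + a • (X 0 * (X 2) ^ 3)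
        + b • (X 1 * (X 2) ^ 3))
    (hG : G = (X 0) ^ 3 * X 2 + (X 0) ^ 2 * (X 1) ^ 2 + (X 0) ^ 2 * X 1 * X 2
        + (3 * a) • (X 0 * (X 1) ^ 2 * X 2) + b • ((X 1) ^ 3 * X 2)) :
    ∀ c : K,
      apol ((X 1) ^ 2 - c • (X 2) ^ 2 : MvPolynomial (Fin 3) K) (F + c • G) = 0 ∧
      Module.finrank K ↥(derivSpace (F + c • G) 2) ≤ 5 :=
  example_not_compressed_general a b F G hF hG
end

section
/- Let F ∈ D_j be a nonzero form and A_F = R/Ann(F). Then the Hilbert function of A_F is symmetric: H(A_F)_i = H(A_F)_{j−i} for all 0 ≤ i ≤ j. -/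
open MvPolynomial

/-!
For `i + i' = j`, consider the pairing `R_i × R_{i'} → K`, `(g, h) ↦ (g h) ∘ F ∈ D_0 = K`.
If `g ∘ F ≠ 0`, it is a nonzero form of degree `i'`, and in characteristic zero such a form `G`
is detected by the constants `x^α ∘ G = α! · coeff_α G` with `|α| = i'`; so the left kernel of
the pairing is `Ann(F)_i`, and symmetrically the right kernel is `Ann(F)_{i'}`. A bilinear form
between finite-dimensional spaces has the same rank seen from either side, hence
`dim R_i / Ann(F)_i = dim R_{i'} / Ann(F)_{i'}`.
-/

section FlipRank

open Module LinearMap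

variable {K V W : Type*} [Field K] [AddCommGroup V] [Module K V] [AddCommGroup W] [Module K W]

theorem LinearMap.finrank_range_flip [FiniteDimensional K W] (B : V →ₗ[K] W →ₗ[K] K) :
    finrank K (range B.flip) = finrank K (range B) := by
  change finrank K (range (B.dualMap ∘ₗ (evalEquiv K W).toLinearMap)) = _
  rw [range_comp_of_range_eq_top _ (LinearEquiv.range _), finrank_range_dualMap_eq_finrank_range]

theorem LinearMap.finrank_quotient_ker_flip [FiniteDimensional K W] (B : V →ₗ[K] W →ₗ[K] K) :
    finrank K (W ⧸ ker B.flip) = finrank K (V ⧸ ker B) := by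
  rw [(quotKerEquivRange B.flip).finrank_eq, (quotKerEquivRange B).finrank_eq,
    finrank_range_flip]

end FlipRank

section Apolarity

variable {K : Type*} [CommSemiring K] {r : ℕ}

lemma apol_mul (g h F : MvPolynomial (Fin r) K) : apol (g * h) F = apol g (apol h F) := by
  simp [apol, map_mul, Module.End.mul_apply]

lemma apol_C (c : K) (F : MvPolynomial (Fin r) K) : apol (C c) F = c • F := by
  simp [apol, ← algebraMap_eq, Module.algebraMap_end_apply]

lemma apol_X_pow (a : Fin r) (n : ℕ) (F : MvPolynomial (Fin r) K) :
    apol (X a ^ n) F = (pderiv a)^[n] F := by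
  simp [apol, apolHom, map_pow, Module.End.pow_apply]

lemma pderiv_iterate_monomial (a : Fin r) (n : ℕ) (β : Fin r →₀ ℕ) (b : K) :
    (pderiv a)^[n] (monomial β b)
      = monomial (β - Finsupp.single a n) (((β a).descFactorial n : K) * b) := by
  induction n with
  | zero => simp
  | succ n ih =>
    rw [Function.iterate_succ_apply', ih, pderiv_monomial, Nat.descFactorial_succ, tsub_tsub,
      ← Finsupp.single_add, Finsupp.tsub_apply, Finsupp.single_eq_same]
    push_cast
    ring

lemma apol_monomial_monomial (α β : Fin r →₀ ℕ) (b : K) :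
    apol (monomial α 1) (monomial β b)
      = monomial (β - α) ((α.prod fun i n => ((β i).descFactorial n : K)) * b) := by
  induction α using Finsupp.induction generalizing β b with
  | zero => simp [apol]
  | single_add a n f ha hn ih =>
    have hfa : (β - f) a = β a := by simp [Finsupp.notMem_support_iff.mp ha]
    rw [← one_mul (1 : K), ← monomial_mul, apol_mul, ih, ← X_pow_eq_monomial, apol_X_pow,
      pderiv_iterate_monomial, hfa, tsub_tsub, add_comm f, Finsupp.prod_add_index_of_disjoint
        (by simpa [Finsupp.support_single a hn] using ha), Finsupp.prod_single_index
        (by simp), mul_assoc]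

lemma prod_descFactorial_eq_zero {α β : Fin r →₀ ℕ} (h : ¬ α ≤ β) :
    (α.prod fun i n => ((β i).descFactorial n : K)) = 0 := by
  obtain ⟨i, hi⟩ : ∃ i, β i < α i := by simpa [Finsupp.le_def] using h
  exact Finset.prod_eq_zero (i := i) (Finsupp.mem_support_iff.mpr (by omega))
    (by simp [Nat.descFactorial_eq_zero_iff_lt.mpr hi])

lemma coeff_zero_apol_monomial_monomial (α β : Fin r →₀ ℕ) (b : K) :
    coeff 0 (apol (monomial α 1) (monomial β b))
      = if α = β then (α.prod fun _ n => (n.factorial : K)) * b else 0 := by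
  rw [apol_monomial_monomial, coeff_monomial]
  split_ifs with hβα hαβ hαβ
  · subst hαβ
    congr 1
    exact Finsupp.prod_congr fun i _ => by rw [Nat.descFactorial_self]
  · have : ¬ α ≤ β := fun h => hαβ (le_antisymm h (tsub_eq_zero_iff_le.mp hβα))
    rw [prod_descFactorial_eq_zero this, zero_mul]
  · simp [hαβ] at hβα
  · rfl

lemma coeff_zero_apol_monomial (α : Fin r →₀ ℕ) (G : MvPolynomial (Fin r) K) :
    coeff 0 (apol (monomial α 1) G) = (α.prod fun _ n => (n.factorial : K)) * coeff α G := by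
  calc coeff 0 (apol (monomial α 1) G)
      = ∑ β ∈ G.support, coeff 0 (apol (monomial α 1) (monomial β (coeff β G))) := by
        conv_lhs => rw [G.as_sum]
        rw [apol, map_sum, coeff_sum]
        rfl
    _ = _ := by simp +contextual [coeff_zero_apol_monomial_monomial]

lemma isHomogeneous_pderiv_iterate {F : MvPolynomial (Fin r) K} {n : ℕ}
    (hF : F.IsHomogeneous n) (a : Fin r) (k : ℕ) :
    ((pderiv a)^[k] F).IsHomogeneous (n - k) := by
  induction k with
  | zero => simpa
  | succ k ih =>
    rw [Function.iterate_succ_apply', ← Nat.sub_sub]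
    exact ih.pderiv

lemma isHomogeneous_apol_monomial {F : MvPolynomial (Fin r) K} {n : ℕ}
    (hF : F.IsHomogeneous n) (α : Fin r →₀ ℕ) (c : K) :
    (apol (monomial α c) F).IsHomogeneous (n - α.degree) := by
  induction α using Finsupp.induction with
  | zero => simpa [apol_C, smul_eq_C_mul] using hF.C_mul c
  | single_add a k f _ _ ih =>
    rw [← one_mul c, ← monomial_mul, apol_mul, ← X_pow_eq_monomial, apol_X_pow, map_add,
      Finsupp.degree_single, add_comm k, ← Nat.sub_sub]
    exact isHomogeneous_pderiv_iterate ih a k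

lemma isHomogeneous_apol {g F : MvPolynomial (Fin r) K} {i n : ℕ} (hg : g.IsHomogeneous i)
    (hF : F.IsHomogeneous n) : (apol g F).IsHomogeneous (n - i) := by
  rw [g.as_sum, apol, map_sum, LinearMap.sum_apply]
  refine IsHomogeneous.sum _ _ _ fun α hα => ?_
  have hα : α.degree = i := (hg.degree_eq_sum_deg_support hα).symm
  exact hα ▸ isHomogeneous_apol_monomial hF α _

end Apolarity

lemma eq_zero_of_forall_coeff_zero_apol {K : Type*} [CommSemiring K] [NoZeroDivisors K]
    [CharZero K] {r d : ℕ} {G : MvPolynomial (Fin r) K} (hG : G.IsHomogeneous d)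
    (h : ∀ p ∈ homogeneousSubmodule (Fin r) K d, coeff 0 (apol p G) = 0) : G = 0 := by
  ext α
  by_cases hα : α.degree = d
  · have hfact : (α.prod fun _ n => (n.factorial : K)) ≠ 0 :=
      Finset.prod_ne_zero_iff.mpr fun _ _ => Nat.cast_ne_zero.mpr (Nat.factorial_ne_zero _)
    have := h _ (isHomogeneous_monomial 1 hα)
    rw [coeff_zero_apol_monomial] at this
    simpa using (mul_eq_zero.mp this).resolve_left hfact
  · simpa using hG.coeff_eq_zero hα

section Pairing

variable {K : Type*} [Field K] {r : ℕ}

instance (i : ℕ) : FiniteDimensional K (homogeneousSubmodule (Fin r) K i) :=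
  Submodule.finiteDimensional_of_le (S₂ := restrictTotalDegree (Fin r) K i)
    fun _ hp => (mem_restrictTotalDegree _ _ _).mpr
      ((mem_homogeneousSubmodule _ _).mp hp).totalDegree_le

noncomputable def apolPairing (F : MvPolynomial (Fin r) K) (i i' : ℕ) :
    homogeneousSubmodule (Fin r) K i →ₗ[K] homogeneousSubmodule (Fin r) K i' →ₗ[K] K :=
  ((LinearMap.mul K _).compl₁₂ (homogeneousSubmodule (Fin r) K i).subtype
    (homogeneousSubmodule (Fin r) K i').subtype).compr₂ (lcoeff K 0 ∘ₗ apolMap F)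

lemma apolPairing_apply (F : MvPolynomial (Fin r) K) {i i' : ℕ}
    (g : homogeneousSubmodule (Fin r) K i) (h : homogeneousSubmodule (Fin r) K i') :
    apolPairing F i i' g h = coeff 0 (apol (g.1 * h.1) F) := rfl

lemma flip_apolPairing (F : MvPolynomial (Fin r) K) (i i' : ℕ) :
    (apolPairing F i i').flip = apolPairing F i' i := by
  ext g h
  simp [apolPairing_apply, mul_comm]

lemma ker_apolPairing [CharZero K] {F : MvPolynomial (Fin r) K} {i i' : ℕ}
    (hF : F.IsHomogeneous (i + i')) :
    LinearMap.ker (apolPairing F i i') = idealPiece (annIdeal F) i := by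
  ext g
  change apolPairing F i i' g = 0 ↔ apol g.1 F = 0
  constructor
  · intro hg
    have hG : (apol g.1 F).IsHomogeneous i' := by
      simpa using isHomogeneous_apol g.2 hF
    refine eq_zero_of_forall_coeff_zero_apol hG fun h hh => ?_
    rw [← apol_mul, mul_comm]
    exact LinearMap.congr_fun hg ⟨h, hh⟩
  · intro hg
    ext h
    rw [apolPairing_apply, mul_comm, apol_mul, hg]
    simp [apol]

end Pairing

theorem gorenstein_hilbert_symmetric_general {K : Type*} [Field K] [CharZero K] {r j : ℕ}
    (F : MvPolynomial (Fin r) K) (hF : F.IsHomogeneous j) :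
    ∀ i ≤ j, hilb (annIdeal F) i = hilb (annIdeal F) (j - i) := by
  intro i hi
  obtain ⟨i', rfl⟩ := Nat.exists_eq_add_of_le hi
  rw [Nat.add_sub_cancel_left, hilb, hilb, ← ker_apolPairing hF,
    ← ker_apolPairing (add_comm i i' ▸ hF), ← flip_apolPairing,
    LinearMap.finrank_quotient_ker_flip]

/-- the Hilbert function of the Artinian Gorenstein algebra
`A_F = R/Ann F` is symmetric: `H(A_F)_i = H(A_F)_{j-i}` for `0 ≤ i ≤ j`. -/
theorem gorenstein_hilbert_symmetric {K : Type*} [Field K] [CharZero K] {r j : ℕ}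
    (F : MvPolynomial (Fin r) K) (hF : F.IsHomogeneous j) (hF0 : F ≠ 0) :
    ∀ i ≤ j, hilb (annIdeal F) i = hilb (annIdeal F) (j - i) :=
  gorenstein_hilbert_symmetric_general F hF
end
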